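/- arXiv:2112.14568 — 2 statements merged into one kernel-verified Lean document; each statement's English description precedes it below -/
import Mathlib

section
/- Let R be a commutative ring, u ∈ R a unit, p ∈ R, g ∈ R[x], and set f(x) = x^e - p·x·g(x) - u·p for some e ≥ 2. In the ring B = R[x₁,x₂]/(f(x₁), f(x₂)), define ω₁ = x₁^{e-1} - x₂^{e-1} and ω₂ = u^{-1}·g(x₁)·(x₂^{e-1} - p·g(x₂))·(x₁ - x₂) + p·(g(x₁) - g(x₂)) - x₂^{e-2}·(x₁ - x₂). Then x₁·ω₁ - x₂·ω₂ = 0 in B. -/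
open MvPolynomial

set_option maxHeartbeats 1000000 in
/-- Let `R` be a commutative ring, `u ∈ R` a unit, `p ∈ R`, `g ∈ R[x]`, and
`f(x) = x^e - p·x·g(x) - u·p` for some `e ≥ 2`.  In `B = R[x₁,x₂]/(f(x₁), f(x₂))`, with
`ω₁ = x₁^{e-1} - x₂^{e-1}` and
`ω₂ = u⁻¹·g(x₁)·(x₂^{e-1} - p·g(x₂))·(x₁-x₂) + p·(g(x₁)-g(x₂)) - x₂^{e-2}·(x₁-x₂)`,
we have `x₁·ω₁ - x₂·ω₂ = 0` in `B`. -/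
theorem stmt_5 (R : Type) [CommRing R] (u : Rˣ) (p : R) (g : Polynomial R)
    (e : ℕ) (he : 2 ≤ e) :
    letI f : Polynomial R :=
      Polynomial.X ^ e - Polynomial.C p * Polynomial.X * g - Polynomial.C ((u : R) * p)
    letI B := MvPolynomial (Fin 2) R ⧸
      Ideal.span {Polynomial.aeval (X 0 : MvPolynomial (Fin 2) R) f,
                  Polynomial.aeval (X 1 : MvPolynomial (Fin 2) R) f}
    letI x₁ : B := Ideal.Quotient.mk _ (X 0)
    letI x₂ : B := Ideal.Quotient.mk _ (X 1)
    letI gx₁ : B := Ideal.Quotient.mk _ (Polynomial.aeval (X 0 : MvPolynomial (Fin 2) R) g)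
    letI gx₂ : B := Ideal.Quotient.mk _ (Polynomial.aeval (X 1 : MvPolynomial (Fin 2) R) g)
    letI pB : B := algebraMap R B p
    letI ω₁ : B := x₁ ^ (e - 1) - x₂ ^ (e - 1)
    letI ω₂ : B := algebraMap R B ((u⁻¹ : Rˣ) : R) * gx₁ * (x₂ ^ (e - 1) - pB * gx₂) * (x₁ - x₂)
      + pB * (gx₁ - gx₂) - x₂ ^ (e - 2) * (x₁ - x₂)
    x₁ * ω₁ - x₂ * ω₂ = 0 := by
  obtain ⟨k, rfl⟩ : ∃ k, e = k + 2 := ⟨e - 2, by omega⟩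
  simp only [show k + 2 - 1 = k + 1 from rfl, show k + 2 - 2 = k from rfl]
  set f : Polynomial R :=
    Polynomial.X ^ (k + 2) - Polynomial.C p * Polynomial.X * g - Polynomial.C ((u : R) * p)
    with hf
  set I := Ideal.span {Polynomial.aeval (X 0 : MvPolynomial (Fin 2) R) f,
                       Polynomial.aeval (X 1 : MvPolynomial (Fin 2) R) f} with hI
  set B := MvPolynomial (Fin 2) R ⧸ I with hB
  set x₁ : B := Ideal.Quotient.mk I (X 0) with hx₁
  set x₂ : B := Ideal.Quotient.mk I (X 1) with hx₂
  set gx₁ : B := Ideal.Quotient.mk I (Polynomial.aeval (X 0 : MvPolynomial (Fin 2) R) g) with hg₁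
  set gx₂ : B := Ideal.Quotient.mk I (Polynomial.aeval (X 1 : MvPolynomial (Fin 2) R) g) with hg₂
  set pB : B := algebraMap R B p with hpB
  have halg : ∀ r : R, algebraMap R B r = Ideal.Quotient.mk I (C r) := fun r => rfl
  have h₁ : x₁ ^ (k + 2) = pB * x₁ * gx₁ + algebraMap R B (u : R) * pB := by
    have h : (Ideal.Quotient.mk I (Polynomial.aeval (X 0 : MvPolynomial (Fin 2) R) f) : B) = 0 :=
      Ideal.Quotient.eq_zero_iff_mem.mpr (Ideal.subset_span (by simp))
    simp only [hf, map_sub, map_mul, map_pow, Polynomial.aeval_X, Polynomial.aeval_C,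
      MvPolynomial.algebraMap_eq, sub_eq_zero] at h
    rw [hx₁, hg₁, hpB, halg, halg]
    linear_combination h
  have h₂ : x₂ ^ (k + 2) = pB * x₂ * gx₂ + algebraMap R B (u : R) * pB := by
    have h : (Ideal.Quotient.mk I (Polynomial.aeval (X 1 : MvPolynomial (Fin 2) R) f) : B) = 0 :=
      Ideal.Quotient.eq_zero_iff_mem.mpr (Ideal.subset_span (by simp))
    simp only [hf, map_sub, map_mul, map_pow, Polynomial.aeval_X, Polynomial.aeval_C,
      MvPolynomial.algebraMap_eq, sub_eq_zero] at h
    rw [hx₂, hg₂, hpB, halg, halg]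
    linear_combination h
  have hu : algebraMap R B ((u⁻¹ : Rˣ) : R) * algebraMap R B (u : R) = 1 := by
    rw [← map_mul]; simp
  linear_combination h₁ - (algebraMap R B ((u⁻¹ : Rˣ) : R) * gx₁ * (x₁ - x₂) + 1) * h₂
    - (pB * gx₁ * (x₁ - x₂)) * hu
end

section
/- Let S → S′ → R be maps of commutative rings and M an (R ⊗_{S′} R)-module. Then there is a natural isomorphism HH_0^S(R; M) ⊗_{HH_0^S(S′)} S′ ≅ HH_0^{S′}(R; M), where HH_0^S(R; M) = R ⊗_{R⊗_S R} M (degree-zero Hochschild homology with coefficients). -/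
noncomputable section

open TensorProduct

variable (S S' R M : Type) [CommRing S] [CommRing S'] [CommRing R]
  [Algebra S S'] [Algebra S' R] [Algebra S R] [IsScalarTower S S' R]
  [AddCommGroup M] [Module (TensorProduct S' R R) M]

/-- The canonical map `R ⊗_S R → R ⊗_{S'} R`. -/
def changeBase : TensorProduct S R R →ₐ[S] TensorProduct S' R R :=
  Algebra.TensorProduct.lift
    ((Algebra.TensorProduct.includeLeft : R →ₐ[S'] TensorProduct S' R R).restrictScalars S)
    ((Algebra.TensorProduct.includeRight : R →ₐ[S'] TensorProduct S' R R).restrictScalars S)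
    (fun _ _ => Commute.all _ _)

/-- `HH₀^S(R; M) := R ⊗_{R ⊗_S R} M`, where `R` is an `(R ⊗_S R)`-algebra via multiplication and
`M` an `(R ⊗_S R)`-module (here via the canonical map `R ⊗_S R → R ⊗_{S'} R`). -/
def HH0S : Type :=
  @TensorProduct (TensorProduct S R R) _ R M _ _
    (Module.compHom R ((Algebra.TensorProduct.lmul' S :
        TensorProduct S R R →ₐ[S] R) : TensorProduct S R R →+* R))
    (Module.compHom M ((changeBase S S' R) : TensorProduct S R R →+* TensorProduct S' R R))

instance : AddCommGroup (HH0S S S' R M) := by unfold HH0S; infer_instance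

instance : Module (TensorProduct S R R) (HH0S S S' R M) := by unfold HH0S; infer_instance

/-- `HH₀^{S'}(R; M) := R ⊗_{R ⊗_{S'} R} M`. -/
def HH0S' : Type :=
  @TensorProduct (TensorProduct S' R R) _ R M _ _
    (Module.compHom R ((Algebra.TensorProduct.lmul' S' :
        TensorProduct S' R R →ₐ[S'] R) : TensorProduct S' R R →+* R)) _

instance : AddCommGroup (HH0S' S' R M) := by unfold HH0S'; infer_instance

/-- `HH₀^S(R;M) ⊗_{S' ⊗_S S'} S'`, the tensor product over `HH₀^S(S')`: since the canonical
ring map `S' ⊗_S S' → HH₀^S(S') = S' ⊗_{S' ⊗_S S'} S'` is surjective and the actions are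
compatible, tensoring over `HH₀^S(S')` is the same as tensoring over `S' ⊗_S S'`, acting on
`HH₀^S(R;M)` through `S' ⊗_S S' → R ⊗_S R` and on `S'` through multiplication. -/
def HH0Sbase : Type :=
  @TensorProduct (TensorProduct S S' S') _ (HH0S S S' R M) S' _ _
    (Module.compHom (HH0S S S' R M)
      ((Algebra.TensorProduct.map (IsScalarTower.toAlgHom S S' R)
          (IsScalarTower.toAlgHom S S' R)) : TensorProduct S S' S' →+* TensorProduct S R R))
    (Module.compHom S' ((Algebra.TensorProduct.lmul' S :
        TensorProduct S S' S' →ₐ[S] S') : TensorProduct S S' S' →+* S'))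

instance : AddCommGroup (HH0Sbase S S' R M) := by unfold HH0Sbase; infer_instance

section Aux

/-- Type synonym for `M` carrying all the ring parameters, so that instances can be found. -/
def AuxM : Type := (fun _ _ _ => M) S S' R

local instance instAuxMAddCommGroup : AddCommGroup (AuxM S S' R M) :=
  inferInstanceAs (AddCommGroup M)

local instance instA'AuxM : Module (TensorProduct S' R R) (AuxM S S' R M) :=
  inferInstanceAs (Module (TensorProduct S' R R) M)

local instance instAR : Module (TensorProduct S R R) R :=
  Module.compHom R ((Algebra.TensorProduct.lmul' S :
      TensorProduct S R R →ₐ[S] R) : TensorProduct S R R →+* R)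

local instance instAM : Module (TensorProduct S R R) (AuxM S S' R M) :=
  Module.compHom (AuxM S S' R M)
    ((changeBase S S' R) : TensorProduct S R R →+* TensorProduct S' R R)

local instance instA'R : Module (TensorProduct S' R R) R :=
  Module.compHom R ((Algebra.TensorProduct.lmul' S' :
      TensorProduct S' R R →ₐ[S'] R) : TensorProduct S' R R →+* R)

local instance instTH :
    Module (TensorProduct S S' S') (R ⊗[TensorProduct S R R] (AuxM S S' R M)) :=
  Module.compHom (R ⊗[TensorProduct S R R] (AuxM S S' R M))
    ((Algebra.TensorProduct.map (IsScalarTower.toAlgHom S S' R)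
        (IsScalarTower.toAlgHom S S' R)) : TensorProduct S S' S' →+* TensorProduct S R R)

local instance instTS' : Module (TensorProduct S S' S') S' :=
  Module.compHom S' ((Algebra.TensorProduct.lmul' S :
      TensorProduct S S' S' →ₐ[S] S') : TensorProduct S S' S' →+* S')

lemma aux_smul_tmul {A N P : Type} [CommRing A] [AddCommGroup N] [AddCommGroup P]
    [Module A N] [Module A P] (a : A) (n : N) (p : P) :
    (a • n) ⊗ₜ[A] p = n ⊗ₜ[A] (a • p) :=
  TensorProduct.smul_tmul a n p

lemma aux_smul_tmul' {A N P : Type} [CommRing A] [AddCommGroup N] [AddCommGroup P]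
    [Module A N] [Module A P] (a : A) (n : N) (p : P) :
    a • (n ⊗ₜ[A] p) = (a • n) ⊗ₜ[A] p :=
  TensorProduct.smul_tmul' a n p

lemma aux_sAR (a : TensorProduct S R R) (r : R) :
    a • r = Algebra.TensorProduct.lmul' S a * r := rfl

lemma aux_sAM (a : TensorProduct S R R) (m : AuxM S S' R M) :
    a • m = (changeBase S S' R a) • m := rfl

lemma aux_sA'R (a : TensorProduct S' R R) (r : R) :
    a • r = Algebra.TensorProduct.lmul' S' a * r := rfl

lemma aux_sTS' (b : TensorProduct S S' S') (s : S') :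
    b • s = Algebra.TensorProduct.lmul' S b * s := rfl

lemma aux_sTH (b : TensorProduct S S' S')
    (x : R ⊗[TensorProduct S R R] (AuxM S S' R M)) :
    b • x = (Algebra.TensorProduct.map (IsScalarTower.toAlgHom S S' R)
        (IsScalarTower.toAlgHom S S' R) b) • x := rfl

lemma aux_changeBase_tmul (r₁ r₂ : R) :
    changeBase S S' R (r₁ ⊗ₜ[S] r₂) = r₁ ⊗ₜ[S'] r₂ := by
  simp [changeBase, Algebra.TensorProduct.lift_tmul]

lemma aux_changeBase_surjective : Function.Surjective (changeBase S S' R) := by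
  intro x
  induction x using TensorProduct.induction_on with
  | zero => exact ⟨0, map_zero _⟩
  | tmul r₁ r₂ => exact ⟨r₁ ⊗ₜ[S] r₂, aux_changeBase_tmul S S' R r₁ r₂⟩
  | add x y hx hy =>
    obtain ⟨a, rfl⟩ := hx
    obtain ⟨b, rfl⟩ := hy
    exact ⟨a + b, map_add _ a b⟩

lemma aux_lmul'_changeBase (a : TensorProduct S R R) :
    Algebra.TensorProduct.lmul' S' (changeBase S S' R a) =
      Algebra.TensorProduct.lmul' S a := by
  induction a using TensorProduct.induction_on with
  | zero => simp
  | tmul r₁ r₂ => rw [aux_changeBase_tmul]; simp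
  | add x y hx hy => simp [hx, hy]

lemma aux_changeBase_map (b : TensorProduct S S' S') :
    changeBase S S' R (Algebra.TensorProduct.map (IsScalarTower.toAlgHom S S' R)
        (IsScalarTower.toAlgHom S S' R) b) =
      algebraMap S' (TensorProduct S' R R) (Algebra.TensorProduct.lmul' S b) := by
  induction b using TensorProduct.induction_on with
  | zero => simp
  | tmul s₁ s₂ =>
    rw [Algebra.TensorProduct.map_tmul, aux_changeBase_tmul,
      Algebra.TensorProduct.lmul'_apply_tmul, Algebra.TensorProduct.algebraMap_apply]
    exact (by
      rw [show (algebraMap S' R s₂ : R) = s₂ • (1 : R) from Algebra.algebraMap_eq_smul_one s₂,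
        TensorProduct.tmul_smul, TensorProduct.smul_tmul', Algebra.smul_def, ← map_mul,
        mul_comm s₂ s₁] :
      (algebraMap S' R) s₁ ⊗ₜ[S'] (algebraMap S' R) s₂ =
        (algebraMap S' R) (s₁ * s₂) ⊗ₜ[S'] (1 : R))
  | add x y hx hy => simp [hx, hy, TensorProduct.add_tmul]

/-- The canonical additive map `HH₀^S(R;M) → HH₀^{S'}(R;M)`. -/
def auxPhi : R ⊗[TensorProduct S R R] (AuxM S S' R M) →+
    R ⊗[TensorProduct S' R R] (AuxM S S' R M) :=
  TensorProduct.liftAddHom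
    (AddMonoidHom.mk' (fun r => AddMonoidHom.mk'
        (fun m => r ⊗ₜ[TensorProduct S' R R] m) (fun m n => TensorProduct.tmul_add r m n))
      (fun r₁ r₂ => AddMonoidHom.ext fun m => by exact TensorProduct.add_tmul r₁ r₂ m))
    (fun a r m => by
      show ((a • r) ⊗ₜ[TensorProduct S' R R] m) = (r ⊗ₜ[TensorProduct S' R R] (a • m))
      rw [aux_sAR S R a r, ← aux_lmul'_changeBase S S' R a,
        ← aux_sA'R S' R (changeBase S S' R a) r, aux_sAM S S' R M a m,
        aux_smul_tmul (changeBase S S' R a) r m])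

lemma auxPhi_tmul (r : R) (m : AuxM S S' R M) :
    auxPhi S S' R M (r ⊗ₜ m) = r ⊗ₜ[TensorProduct S' R R] m := rfl

lemma auxPhi_smul (a : TensorProduct S R R)
    (x : R ⊗[TensorProduct S R R] (AuxM S S' R M)) :
    auxPhi S S' R M (a • x) = changeBase S S' R a • auxPhi S S' R M x := by
  induction x using TensorProduct.induction_on with
  | zero => rw [smul_zero a, map_zero (auxPhi S S' R M), smul_zero (changeBase S S' R a)]
  | tmul r m =>
    rw [aux_smul_tmul' a r m, auxPhi_tmul S S' R M (a • r) m, auxPhi_tmul S S' R M r m,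
      aux_smul_tmul' (changeBase S S' R a) r m,
      aux_sAR S R a r, ← aux_lmul'_changeBase S S' R a,
      ← aux_sA'R S' R (changeBase S S' R a) r]
  | add x y hx hy =>
    rw [smul_add a x y, map_add (auxPhi S S' R M) (a • x) (a • y),
      map_add (auxPhi S S' R M) x y, hx, hy,
      smul_add (changeBase S S' R a) (auxPhi S S' R M x) (auxPhi S S' R M y)]

/-- The forward map. -/
def auxF : (R ⊗[TensorProduct S R R] (AuxM S S' R M)) ⊗[TensorProduct S S' S'] S' →+
    R ⊗[TensorProduct S' R R] (AuxM S S' R M) :=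
  TensorProduct.liftAddHom
    (AddMonoidHom.mk' (fun x => AddMonoidHom.mk'
        (fun s => algebraMap S' (TensorProduct S' R R) s • auxPhi S S' R M x)
        (fun s t => by
          show algebraMap S' (TensorProduct S' R R) (s + t) • auxPhi S S' R M x =
            algebraMap S' (TensorProduct S' R R) s • auxPhi S S' R M x +
              algebraMap S' (TensorProduct S' R R) t • auxPhi S S' R M x
          rw [map_add (algebraMap S' (TensorProduct S' R R)) s t,
            add_smul (algebraMap S' (TensorProduct S' R R) s)
              (algebraMap S' (TensorProduct S' R R) t) (auxPhi S S' R M x)]))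
      (fun x y => AddMonoidHom.ext fun s => by
        show algebraMap S' (TensorProduct S' R R) s • auxPhi S S' R M (x + y) =
          algebraMap S' (TensorProduct S' R R) s • auxPhi S S' R M x +
            algebraMap S' (TensorProduct S' R R) s • auxPhi S S' R M y
        rw [map_add (auxPhi S S' R M) x y,
          smul_add (algebraMap S' (TensorProduct S' R R) s) (auxPhi S S' R M x)
            (auxPhi S S' R M y)]))
    (fun b x s => by
      show algebraMap S' (TensorProduct S' R R) s • auxPhi S S' R M (b • x) =
        algebraMap S' (TensorProduct S' R R) (b • s) • auxPhi S S' R M x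
      rw [aux_sTH S S' R M b x,
        auxPhi_smul S S' R M (Algebra.TensorProduct.map (IsScalarTower.toAlgHom S S' R)
          (IsScalarTower.toAlgHom S S' R) b) x,
        aux_changeBase_map S S' R b, aux_sTS' S S' b s,
        smul_smul (algebraMap S' (TensorProduct S' R R) s)
          (algebraMap S' (TensorProduct S' R R) (Algebra.TensorProduct.lmul' S b))
          (auxPhi S S' R M x),
        ← map_mul (algebraMap S' (TensorProduct S' R R)) s (Algebra.TensorProduct.lmul' S b),
        mul_comm s (Algebra.TensorProduct.lmul' S b)])

lemma auxF_tmul (x : R ⊗[TensorProduct S R R] (AuxM S S' R M)) (s : S') :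
    auxF S S' R M (x ⊗ₜ s) = algebraMap S' (TensorProduct S' R R) s • auxPhi S S' R M x := rfl

/-- The backward map. -/
def auxG : R ⊗[TensorProduct S' R R] (AuxM S S' R M) →+
    (R ⊗[TensorProduct S R R] (AuxM S S' R M)) ⊗[TensorProduct S S' S'] S' :=
  TensorProduct.liftAddHom
    (AddMonoidHom.mk' (fun (r : R) => AddMonoidHom.mk'
        (fun (m : AuxM S S' R M) =>
          (r ⊗ₜ[TensorProduct S R R] m) ⊗ₜ[TensorProduct S S' S'] (1 : S'))
        (fun m n => by
          show ((r ⊗ₜ[TensorProduct S R R] (m + n)) ⊗ₜ[TensorProduct S S' S'] (1 : S')) =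
            (r ⊗ₜ[TensorProduct S R R] m) ⊗ₜ[TensorProduct S S' S'] (1 : S') +
              (r ⊗ₜ[TensorProduct S R R] n) ⊗ₜ[TensorProduct S S' S'] (1 : S')
          rw [TensorProduct.tmul_add r m n, TensorProduct.add_tmul
            (r ⊗ₜ[TensorProduct S R R] m) (r ⊗ₜ[TensorProduct S R R] n) (1 : S')]))
      (fun r₁ r₂ => AddMonoidHom.ext fun m => by
        show ((r₁ + r₂) ⊗ₜ[TensorProduct S R R] m) ⊗ₜ[TensorProduct S S' S'] (1 : S') =
          (r₁ ⊗ₜ[TensorProduct S R R] m) ⊗ₜ[TensorProduct S S' S'] (1 : S') +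
            (r₂ ⊗ₜ[TensorProduct S R R] m) ⊗ₜ[TensorProduct S S' S'] (1 : S')
        rw [TensorProduct.add_tmul r₁ r₂ m, TensorProduct.add_tmul
          (r₁ ⊗ₜ[TensorProduct S R R] m) (r₂ ⊗ₜ[TensorProduct S R R] m) (1 : S')]))
    (fun a' r m => by
      obtain ⟨a, rfl⟩ := aux_changeBase_surjective S S' R a'
      show ((changeBase S S' R a • r) ⊗ₜ[TensorProduct S R R] m) ⊗ₜ (1 : S') =
        (r ⊗ₜ[TensorProduct S R R] (changeBase S S' R a • m)) ⊗ₜ (1 : S')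
      rw [show (changeBase S S' R a • r : R) = a • r by
            rw [aux_sA'R S' R (changeBase S S' R a) r, aux_lmul'_changeBase S S' R a,
              ← aux_sAR S R a r],
        show (changeBase S S' R a • m : AuxM S S' R M) = a • m from
          (aux_sAM S S' R M a m).symm,
        aux_smul_tmul a r m])

lemma auxG_tmul (r : R) (m : AuxM S S' R M) :
    auxG S S' R M (r ⊗ₜ m) =
      (r ⊗ₜ[TensorProduct S R R] m) ⊗ₜ[TensorProduct S S' S'] (1 : S') := rfl

lemma aux_left_inv
    (z : (R ⊗[TensorProduct S R R] (AuxM S S' R M)) ⊗[TensorProduct S S' S'] S') :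
    auxG S S' R M (auxF S S' R M z) = z := by
  induction z using TensorProduct.induction_on with
  | zero => rw [map_zero (auxF S S' R M), map_zero (auxG S S' R M)]
  | tmul x s =>
    rw [auxF_tmul S S' R M x s]
    induction x using TensorProduct.induction_on with
    | zero =>
      rw [map_zero (auxPhi S S' R M), smul_zero (algebraMap S' (TensorProduct S' R R) s),
        map_zero (auxG S S' R M), TensorProduct.zero_tmul _ s]
    | tmul r m =>
      rw [auxPhi_tmul S S' R M r m,
        aux_smul_tmul' (algebraMap S' (TensorProduct S' R R) s) r m,
        auxG_tmul S S' R M (algebraMap S' (TensorProduct S' R R) s • r) m]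
      have h1 : (algebraMap S' (TensorProduct S' R R) s • r : R) = algebraMap S' R s * r := by
        rw [aux_sA'R S' R (algebraMap S' (TensorProduct S' R R) s) r]
        rw [AlgHom.commutes (Algebra.TensorProduct.lmul' S' (S := R)) s]
      have h2 : ((s ⊗ₜ[S] (1 : S') : TensorProduct S S' S') •
          (r ⊗ₜ[TensorProduct S R R] m) :
            R ⊗[TensorProduct S R R] (AuxM S S' R M)) =
          (algebraMap S' R s * r) ⊗ₜ[TensorProduct S R R] m := by
        rw [aux_sTH S S' R M (s ⊗ₜ[S] (1 : S')) (r ⊗ₜ[TensorProduct S R R] m),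
          Algebra.TensorProduct.map_tmul,
          aux_smul_tmul' ((IsScalarTower.toAlgHom S S' R) s ⊗ₜ[S]
            (IsScalarTower.toAlgHom S S' R) (1 : S')) r m,
          aux_sAR S R ((IsScalarTower.toAlgHom S S' R) s ⊗ₜ[S]
            (IsScalarTower.toAlgHom S S' R) (1 : S')) r,
          Algebra.TensorProduct.lmul'_apply_tmul, map_one (IsScalarTower.toAlgHom S S' R),
          mul_one]
        rfl
      have h3 : ((s ⊗ₜ[S] (1 : S') : TensorProduct S S' S') • (1 : S')) = s := by
        rw [aux_sTS' S S' (s ⊗ₜ[S] (1 : S')) (1 : S'),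
          Algebra.TensorProduct.lmul'_apply_tmul, mul_one, mul_one]
      rw [h1, ← h2, aux_smul_tmul (s ⊗ₜ[S] (1 : S') : TensorProduct S S' S')
        (r ⊗ₜ[TensorProduct S R R] m) (1 : S'), h3]
    | add x y hx hy =>
      rw [map_add (auxPhi S S' R M) x y,
        smul_add (algebraMap S' (TensorProduct S' R R) s) (auxPhi S S' R M x)
          (auxPhi S S' R M y),
        map_add (auxG S S' R M) _ _, hx, hy, ← TensorProduct.add_tmul x y s]
  | add x y hx hy =>
    rw [map_add (auxF S S' R M) x y, map_add (auxG S S' R M) _ _, hx, hy]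

lemma aux_right_inv (z : R ⊗[TensorProduct S' R R] (AuxM S S' R M)) :
    auxF S S' R M (auxG S S' R M z) = z := by
  induction z using TensorProduct.induction_on with
  | zero => rw [map_zero (auxG S S' R M), map_zero (auxF S S' R M)]
  | tmul r m =>
    rw [auxG_tmul S S' R M r m, auxF_tmul S S' R M (r ⊗ₜ[TensorProduct S R R] m) (1 : S'),
      auxPhi_tmul S S' R M r m, map_one (algebraMap S' (TensorProduct S' R R)),
      one_smul (TensorProduct S' R R) (r ⊗ₜ[TensorProduct S' R R] m)]
  | add x y hx hy =>
    rw [map_add (auxG S S' R M) x y, map_add (auxF S S' R M) _ _, hx, hy]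

/-- The additive equivalence. -/
def auxEquiv :
    ((R ⊗[TensorProduct S R R] (AuxM S S' R M)) ⊗[TensorProduct S S' S'] S') ≃+
      (R ⊗[TensorProduct S' R R] (AuxM S S' R M)) :=
  AddEquiv.mk' ⟨auxF S S' R M, auxG S S' R M, aux_left_inv S S' R M, aux_right_inv S S' R M⟩
    (map_add (auxF S S' R M))

end Aux

/-- outer base change, underived.  For commutative rings `S → S' → R` and an
`(R ⊗_{S'} R)`-module `M`, there is a natural isomorphism
`HH₀^S(R; M) ⊗_{HH₀^S(S')} S' ≅ HH₀^{S'}(R; M)`. -/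
theorem stmt_9 : Nonempty ((HH0Sbase S S' R M) ≃+ (HH0S' S' R M)) := by
  exact ⟨auxEquiv S S' R M⟩

end
end
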